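/- arXiv:0905.1879 — 2 statements merged into one kernel-verified Lean document; each statement's English description precedes it below -/
import Mathlib

section
/- Let C be a Baer*-category in which every morphism has a Moore–Penrose generalized inverse with respect to the involution *, every projection is closed, and every projection can be written as a monomorphism composed with an epimorphism. Then every monomorphism u of C is a kernel of the projection (u*)′, and every epimorphism v of C is a cokernel of the projection v′. In particular C is normal and conormal. -/
open CategoryTheory CategoryTheory.Limits

universe v u

/-- An operation assigning to each morphism a morphism in the opposite direction. -/
def MorphismOp (C : Type u) [Category.{v} C] : Type (max u v) :=
  ∀ {A B : C}, (A ⟶ B) → (B ⟶ A)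

variable {C : Type u} [Category.{v} C]

/-- `s` is an involution: a contravariant endofunctor which is the identity on objects
and involutive on morphisms. -/
def IsInvolution (s : MorphismOp C) : Prop :=
  (∀ {A B D : C} (f : A ⟶ B) (g : B ⟶ D), s (f ≫ g) = s g ≫ s f) ∧
  (∀ A : C, s (𝟙 A) = 𝟙 A) ∧
  (∀ {A B : C} (f : A ⟶ B), s (s f) = f)

/-- A projection on `A` is an idempotent endomorphism fixed by the involution `s`. -/
def IsProjection (s : MorphismOp C) {A : C} (i : A ⟶ A) : Prop :=
  i ≫ i = i ∧ s i = i

/-- `g` is a Moore–Penrose generalized inverse of `f` with respect to `s`: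
`f g f = f`, `g f g = g`, `(f g)* = f g`, `(g f)* = g f`. -/
def IsMoorePenrose (s : MorphismOp C) {A B : C} (f : A ⟶ B) (g : B ⟶ A) : Prop :=
  f ≫ g ≫ f = f ∧ g ≫ f ≫ g = g ∧ s (f ≫ g) = f ≫ g ∧ s (g ≫ f) = g ≫ f

/-- `inv` makes `C` an inverse category: each morphism `f` has `inv f` as its unique
generalized inverse (`f ∘ (inv f) ∘ f = f` and `(inv f) ∘ f ∘ (inv f) = inv f`). -/
def IsInverseOp (inv : MorphismOp C) : Prop :=
  ∀ {A B : C} (f : A ⟶ B),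
    (f ≫ inv f ≫ f = f ∧ inv f ≫ f ≫ inv f = inv f) ∧
    ∀ g : B ⟶ A, f ≫ g ≫ f = f → g ≫ f ≫ g = g → g = inv f

/-- `u` is a kernel of `f`. -/
def IsKernelOf [HasZeroMorphisms C] {K A B : C} (u : K ⟶ A) (f : A ⟶ B) : Prop :=
  u ≫ f = 0 ∧ ∀ {X : C} (g : X ⟶ A), g ≫ f = 0 → ∃! h : X ⟶ K, h ≫ u = g

/-- `v` is a cokernel of `f`. -/
def IsCokernelOf [HasZeroMorphisms C] {A B Q : C} (v : B ⟶ Q) (f : A ⟶ B) : Prop :=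
  f ≫ v = 0 ∧ ∀ {X : C} (g : B ⟶ X), f ≫ g = 0 → ∃! h : Q ⟶ X, v ≫ h = g

/-- An exact category (in the sense of the paper): a category with a zero object,
kernels and cokernels, in which every monomorphism is a kernel, every epimorphism is a
cokernel, and every morphism factors as a monomorphism composed with an epimorphism. -/
structure IsExactCategory (C : Type u) [Category.{v} C] [HasZeroObject C]
    [HasZeroMorphisms C] : Prop where
  hasKernels : ∀ {A B : C} (f : A ⟶ B), ∃ (K : C) (u : K ⟶ A), IsKernelOf u f
  hasCokernels : ∀ {A B : C} (f : A ⟶ B), ∃ (Q : C) (v : B ⟶ Q), IsCokernelOf v f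
  normal : ∀ {X A : C} (u : X ⟶ A), Mono u → ∃ (B : C) (f : A ⟶ B), IsKernelOf u f
  conormal : ∀ {A B : C} (v : A ⟶ B), Epi v → ∃ (X : C) (f : X ⟶ A), IsCokernelOf v f
  monoEpiFact : ∀ {A B : C} (f : A ⟶ B),
    ∃ (I : C) (q : A ⟶ I) (p : I ⟶ B), Epi q ∧ Mono p ∧ q ≫ p = f

/-- A Baer*-structure on `C` with respect to `s`: each morphism `f` has a projection
`f′ = prj f` on its domain with `f ∘ g = 0` iff `g` factors through `f′`. -/
structure BaerStar (C : Type u) [Category.{v} C] [HasZeroObject C] [HasZeroMorphisms C]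
    (s : MorphismOp C) where
  prj : ∀ {A B : C}, (A ⟶ B) → (A ⟶ A)
  prj_isProjection : ∀ {A B : C} (f : A ⟶ B), IsProjection s (prj f)
  prj_spec : ∀ {A B X : C} (f : A ⟶ B) (g : X ⟶ A),
    g ≫ f = 0 ↔ ∃ h : X ⟶ A, g = h ≫ prj f

/-- The natural partial order on projections: `e ≤ f` iff `e = e ∘ f`. -/
def ProjLe {A : C} (e f : A ⟶ A) : Prop := f ≫ e = e

/-- `p` is the image of `g`: the smallest subobject of the codomain of `g` through
which `g` factors. -/
def IsImageOf {A B I : C} (p : I ⟶ B) (g : A ⟶ B) : Prop :=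
  Mono p ∧ (∃ t : A ⟶ I, t ≫ p = g) ∧
  ∀ {S : C} (t : A ⟶ S) (m : S ⟶ B), Mono m → t ≫ m = g → ∃ w : I ⟶ S, w ≫ m = p

/-!
If `u⁺` is the Moore–Penrose inverse of `u`, then `u⁺u` is a projection with the same left
annihilators as `u*` (since `u⁺u = u*u⁺*` and `u* = u⁺u u*`), so `(u*)′ = (u⁺u)′` and, projections
being closed, `(u*)″ = u⁺u`. Hence `g (u*)′ = 0` iff `g u⁺u = g` iff `g` factors through `u`, which
for a monomorphism `u` is the universal property of the kernel. Applying the involution, which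
turns epimorphisms into monomorphisms and kernels into cokernels, gives the dual statement.
-/

theorem isKernelOf_of_mono [HasZeroMorphisms C] {K A B : C} {u : K ⟶ A} {f : A ⟶ B} [Mono u]
    (hfac : ∀ {X : C} (g : X ⟶ A), g ≫ f = 0 ↔ ∃ h : X ⟶ K, h ≫ u = g) :
    IsKernelOf u f := by
  refine ⟨(hfac u).2 ⟨𝟙 K, Category.id_comp u⟩, fun g hg => ?_⟩
  obtain ⟨h, hh⟩ := (hfac g).1 hg
  exact ⟨h, hh, fun h' hh' => (cancel_mono u).1 (hh'.trans hh.symm)⟩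

namespace IsInvolution

variable {s : MorphismOp C} (hs : IsInvolution s)
include hs

theorem map_comp {A B D : C} (f : A ⟶ B) (g : B ⟶ D) : s (f ≫ g) = s g ≫ s f :=
  hs.1 f g

theorem map_map {A B : C} (f : A ⟶ B) : s (s f) = f :=
  hs.2.2 f

theorem map_zero [HasZeroMorphisms C] {A B : C} : s (0 : A ⟶ B) = 0 := by
  calc s (0 : A ⟶ B) = s ((0 : A ⟶ A) ≫ s (0 : B ⟶ A)) := by rw [zero_comp]
    _ = 0 := by rw [hs.map_comp, hs.map_map, zero_comp]

theorem mono_map_of_epi {A B : C} {v : A ⟶ B} (hv : Epi v) : Mono (s v) :=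
  ⟨fun a b hab => by
    have h := congrArg s hab
    rw [hs.map_comp, hs.map_comp, hs.map_map, cancel_epi] at h
    rw [← hs.map_map a, h, hs.map_map]⟩

theorem isCokernelOf_map_of_isKernelOf [HasZeroMorphisms C] {K A B : C} {u : K ⟶ A}
    {f : A ⟶ B} (hu : IsKernelOf u f) : IsCokernelOf (s u) (s f) := by
  refine ⟨by rw [← hs.map_comp, hu.1, hs.map_zero], fun g hg => ?_⟩
  have hsg : s g ≫ f = 0 := by
    rw [← hs.map_map f, ← hs.map_comp, hg, hs.map_zero]
  obtain ⟨h, hh, huniq⟩ := hu.2 (s g) hsg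
  refine ⟨s h, ?_, fun h' hh' => ?_⟩
  · beta_reduce
    rw [← hs.map_comp, hh, hs.map_map]
  have hsh' : s h' ≫ u = s g := by rw [← hh', hs.map_comp, hs.map_map]
  rw [← huniq (s h') hsh', hs.map_map]

end IsInvolution

namespace IsMoorePenrose

variable {s : MorphismOp C} {A B : C} {f : A ⟶ B} {g : B ⟶ A} (hf : IsMoorePenrose s f g)
include hf

theorem comp_inv_comp : f ≫ g ≫ f = f := hf.1

theorem map_inv_comp : s (g ≫ f) = g ≫ f := hf.2.2.2

theorem isProjection_inv_comp : IsProjection s (g ≫ f) :=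
  ⟨by rw [Category.assoc, hf.comp_inv_comp], hf.map_inv_comp⟩

theorem comp_map_eq_zero_iff [HasZeroMorphisms C] (hs : IsInvolution s) {X : C} (x : X ⟶ B) :
    x ≫ s f = 0 ↔ x ≫ g ≫ f = 0 := by
  have hgf : g ≫ f = s f ≫ s g := by rw [← hf.map_inv_comp, hs.map_comp]
  have hsf : (g ≫ f) ≫ s f = s f := by
    rw [← hf.map_inv_comp, ← hs.map_comp, hf.comp_inv_comp]
  constructor
  · intro hx
    rw [hgf, ← Category.assoc, hx, zero_comp]
  · intro hx
    rw [← hsf, ← Category.assoc, hx, zero_comp]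

end IsMoorePenrose

namespace BaerStar

variable [HasZeroObject C] [HasZeroMorphisms C] {s : MorphismOp C} (Bs : BaerStar C s)

theorem map_prj {A B : C} (f : A ⟶ B) : s (Bs.prj f) = Bs.prj f :=
  (Bs.prj_isProjection f).2

theorem comp_prj_eq_self_iff {A B X : C} (f : A ⟶ B) (g : X ⟶ A) :
    g ≫ Bs.prj f = g ↔ g ≫ f = 0 := by
  refine ⟨fun h => (Bs.prj_spec f g).2 ⟨g, h.symm⟩, fun h => ?_⟩
  obtain ⟨k, rfl⟩ := (Bs.prj_spec f g).1 h
  rw [Category.assoc, (Bs.prj_isProjection f).1]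

theorem prj_comp_self {A B : C} (f : A ⟶ B) : Bs.prj f ≫ f = 0 :=
  (Bs.comp_prj_eq_self_iff f _).1 (Bs.prj_isProjection f).1

theorem prj_eq_of_comp_eq_zero_iff (hs : IsInvolution s) {A B B' : C} {f : A ⟶ B}
    {f' : A ⟶ B'} (hff' : ∀ {X : C} (x : X ⟶ A), x ≫ f = 0 ↔ x ≫ f' = 0) :
    Bs.prj f = Bs.prj f' := by
  have h₁ : Bs.prj f ≫ Bs.prj f' = Bs.prj f :=
    (Bs.comp_prj_eq_self_iff _ _).2 ((hff' _).1 (Bs.prj_comp_self f))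
  have h₂ : Bs.prj f' ≫ Bs.prj f = Bs.prj f' :=
    (Bs.comp_prj_eq_self_iff _ _).2 ((hff' _).2 (Bs.prj_comp_self f'))
  have h := congrArg s h₁
  rwa [hs.map_comp, Bs.map_prj, Bs.map_prj, h₂, eq_comm] at h

variable (hs : IsInvolution s)
  (hclosed : ∀ {A : C} (i : A ⟶ A), IsProjection s i → Bs.prj (Bs.prj i) = i)
include hs hclosed

theorem prj_prj_map_eq {X A : C} {u : X ⟶ A} {g : A ⟶ X} (hu : IsMoorePenrose s u g) :
    Bs.prj (Bs.prj (s u)) = g ≫ u := by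
  rw [Bs.prj_eq_of_comp_eq_zero_iff hs (hu.comp_map_eq_zero_iff hs),
    hclosed _ hu.isProjection_inv_comp]

theorem comp_prj_map_eq_zero_iff {X A Y : C} {u : X ⟶ A} {g : A ⟶ X}
    (hu : IsMoorePenrose s u g) (x : Y ⟶ A) :
    x ≫ Bs.prj (s u) = 0 ↔ ∃ h : Y ⟶ X, h ≫ u = x := by
  rw [← Bs.comp_prj_eq_self_iff, Bs.prj_prj_map_eq hs hclosed hu]
  constructor
  · exact fun hx => ⟨x ≫ g, by rw [Category.assoc, hx]⟩
  · rintro ⟨h, rfl⟩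
    rw [Category.assoc, hu.comp_inv_comp]

end BaerStar

theorem stmt4_general [HasZeroObject C] [HasZeroMorphisms C] (s : MorphismOp C)
    (hs : IsInvolution s) (mp : MorphismOp C)
    (hmp : ∀ {A B : C} (f : A ⟶ B), IsMoorePenrose s f (mp f))
    (Bs : BaerStar C s)
    (hclosed : ∀ {A : C} (i : A ⟶ A), IsProjection s i → Bs.prj (Bs.prj i) = i) :
    (∀ {X A : C} (u : X ⟶ A), Mono u → IsKernelOf u (Bs.prj (s u))) ∧
    (∀ {A B : C} (v : A ⟶ B), Epi v → IsCokernelOf v (Bs.prj v)) ∧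
    (∀ {X A : C} (u : X ⟶ A), Mono u → ∃ (B : C) (g : A ⟶ B), IsKernelOf u g) ∧
    (∀ {A B : C} (v : A ⟶ B), Epi v → ∃ (X : C) (g : X ⟶ A), IsCokernelOf v g) := by
  have hker : ∀ {X A : C} (u : X ⟶ A), Mono u → IsKernelOf u (Bs.prj (s u)) :=
    fun u _ => isKernelOf_of_mono (Bs.comp_prj_map_eq_zero_iff hs hclosed (hmp u))
  have hcoker : ∀ {A B : C} (v : A ⟶ B), Epi v → IsCokernelOf v (Bs.prj v) := by
    intro A B v hv
    have h := hs.isCokernelOf_map_of_isKernelOf (hker (s v) (hs.mono_map_of_epi hv))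
    rwa [hs.map_map, Bs.map_prj] at h
  exact ⟨hker, hcoker, fun u hu => ⟨_, _, hker u hu⟩, fun v hv => ⟨_, _, hcoker v hv⟩⟩

/-- In a Baer*-category with Moore–Penrose inverses, closed projections
and mono-epi factorizations of projections: every monomorphism `u` is a kernel of `(u*)′`
and every epimorphism `v` is a cokernel of `v′`; in particular the category is normal and
conormal. -/
theorem stmt4 [HasZeroObject C] [HasZeroMorphisms C] (s : MorphismOp C)
    (hs : IsInvolution s) (mp : MorphismOp C)
    (hmp : ∀ {A B : C} (f : A ⟶ B), IsMoorePenrose s f (mp f))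
    (Bs : BaerStar C s)
    (hclosed : ∀ {A : C} (i : A ⟶ A), IsProjection s i → Bs.prj (Bs.prj i) = i)
    (hfact : ∀ {A : C} (i : A ⟶ A), IsProjection s i →
      ∃ (I : C) (q : A ⟶ I) (p : I ⟶ A), Epi q ∧ Mono p ∧ q ≫ p = i) :
    (∀ {X A : C} (u : X ⟶ A), Mono u → IsKernelOf u (Bs.prj (s u))) ∧
    (∀ {A B : C} (v : A ⟶ B), Epi v → IsCokernelOf v (Bs.prj v)) ∧
    (∀ {X A : C} (u : X ⟶ A), Mono u → ∃ (B : C) (g : A ⟶ B), IsKernelOf u g) ∧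
    (∀ {A B : C} (v : A ⟶ B), Epi v → ∃ (X : C) (g : X ⟶ A), IsCokernelOf v g) :=
  stmt4_general s hs mp hmp Bs hclosed
end

section
/- An inverse category C is exact if and only if C is a Baer*-category with respect to the canonical involution, every projection of C is closed, and every projection of C can be written as a monomorphism composed with an epimorphism. -/
open CategoryTheory CategoryTheory.Limits

universe v u

variable {C : Type u} [Category.{v} C]

/-
In an inverse category `inv` reverses composition, idempotents commute and are self-inverse,
a mono `u` satisfies `u ≫ inv u = 𝟙`, and `inv` turns kernels of `f` into cokernels of
`inv f`. If `C` is exact, `f′ := inv u ≫ u` for a kernel `u` of `f` is a Baer*-structure, and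
a projection `i` is closed because every morphism killed by the kernel of `i` is fixed by `i`
(write the epi part of `i` as a cokernel). Conversely, a mono splitting `f′` is a kernel of
`f`, closedness of `inv u ≫ u` exhibits a mono `u` as the kernel of `(inv u ≫ u)′`, and
cokernels and conormality follow by applying `inv`.
-/

lemma exists_eq_comp_iff_comp_eq_self {X A : C} {e : A ⟶ A} (he : e ≫ e = e) (g : X ⟶ A) :
    (∃ h : X ⟶ A, g = h ≫ e) ↔ g ≫ e = g :=
  ⟨fun ⟨h, hg⟩ => by rw [hg, Category.assoc, he], fun hg => ⟨g, hg.symm⟩⟩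

lemma comp_eq_id_of_fac_of_idem {A I : C} {i : A ⟶ A} {q : A ⟶ I} {p : I ⟶ A}
    [Epi q] [Mono p] (hqp : q ≫ p = i) (hi : i ≫ i = i) : p ≫ q = 𝟙 I := by
  refine (cancel_mono p).1 ((cancel_epi q).1 ?_)
  simp only [Category.assoc, Category.id_comp]
  rw [reassoc_of% hqp, hqp, hi]

lemma IsProjection.inv_eq {s : MorphismOp C} {A : C} {i : A ⟶ A} (hi : IsProjection s i) :
    s i = i :=
  hi.2

section Kernels

variable [HasZeroMorphisms C]

lemma IsKernelOf.mono {K A B : C} {u : K ⟶ A} {f : A ⟶ B} (hu : IsKernelOf u f) :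
    Mono u where
  right_cancellation a b hab := by
    obtain ⟨_, _, huniq⟩ := hu.2 (a ≫ u) (by rw [Category.assoc, hu.1, comp_zero])
    rw [huniq a rfl, huniq b hab.symm]

lemma isKernelOf_of_fac {A B I : C} {f : A ⟶ B} {q : A ⟶ I} {p : I ⟶ A}
    (hpq : p ≫ q = 𝟙 I) (hf : ∀ {X : C} (g : X ⟶ A), g ≫ f = 0 ↔ g ≫ q ≫ p = g) :
    IsKernelOf p f := by
  refine ⟨(hf p).2 (by rw [reassoc_of% hpq]), fun g hg => ?_⟩
  refine ⟨g ≫ q, by simpa only [Category.assoc] using (hf g).1 hg, fun y hy => ?_⟩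
  rw [← hy, Category.assoc, hpq, Category.comp_id]

end Kernels

namespace IsInverseOp

variable {inv : MorphismOp C}

lemma comp_inv_comp (hinv : IsInverseOp inv) {A B : C} (f : A ⟶ B) :
    f ≫ inv f ≫ f = f :=
  (hinv f).1.1

lemma inv_comp_comp_inv (hinv : IsInverseOp inv) {A B : C} (f : A ⟶ B) :
    inv f ≫ f ≫ inv f = inv f :=
  (hinv f).1.2

lemma eq_inv (hinv : IsInverseOp inv) {A B : C} {f : A ⟶ B} {g : B ⟶ A}
    (h₁ : f ≫ g ≫ f = f) (h₂ : g ≫ f ≫ g = g) : g = inv f :=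
  (hinv f).2 g h₁ h₂

lemma inv_inv (hinv : IsInverseOp inv) {A B : C} (f : A ⟶ B) : inv (inv f) = f :=
  (hinv.eq_inv (hinv.inv_comp_comp_inv f) (hinv.comp_inv_comp f)).symm

lemma inv_eq_self_of_idem (hinv : IsInverseOp inv) {A : C} {e : A ⟶ A} (he : e ≫ e = e) :
    inv e = e :=
  (hinv.eq_inv (by rw [he, he]) (by rw [he, he])).symm

lemma inv_comp_self_idem (hinv : IsInverseOp inv) {A B : C} (f : A ⟶ B) :
    (inv f ≫ f) ≫ (inv f ≫ f) = inv f ≫ f := by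
  rw [Category.assoc, reassoc_of% hinv.inv_comp_comp_inv f]

lemma comp_inv_self_idem (hinv : IsInverseOp inv) {A B : C} (f : A ⟶ B) :
    (f ≫ inv f) ≫ (f ≫ inv f) = f ≫ inv f := by
  rw [Category.assoc, reassoc_of% hinv.comp_inv_comp f]

lemma isProjection_inv_comp_self (hinv : IsInverseOp inv) {A B : C} (f : A ⟶ B) :
    IsProjection inv (inv f ≫ f) :=
  ⟨hinv.inv_comp_self_idem f, hinv.inv_eq_self_of_idem (hinv.inv_comp_self_idem f)⟩

/-- With `x := inv (e ≫ f)`, the morphism `f ≫ x ≫ e` is another generalized inverse of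
`e ≫ f`, hence equals `x`; this forces `x`, and so `e ≫ f = inv x`, to be idempotent. -/
lemma comp_idem (hinv : IsInverseOp inv) {A : C} {e f : A ⟶ A} (he : e ≫ e = e)
    (hf : f ≫ f = f) : (e ≫ f) ≫ (e ≫ f) = e ≫ f := by
  set x := inv (e ≫ f)
  have hx₁ := hinv.comp_inv_comp (e ≫ f)
  have hx₂ : x ≫ (e ≫ f) ≫ x = x := hinv.inv_comp_comp_inv (e ≫ f)
  simp only [Category.assoc] at hx₁ hx₂
  have hy : f ≫ x ≫ e = x := by
    refine hinv.eq_inv ?_ ?_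
    · simp only [Category.assoc]
      rw [reassoc_of% he, reassoc_of% hf, hx₁]
    · simp only [Category.assoc]
      rw [reassoc_of% he, reassoc_of% hf, reassoc_of% hx₂]
  have hxx : x ≫ x = x := by
    conv_lhs => rw [← hy]
    simp only [Category.assoc]
    rw [reassoc_of% hx₂, hy]
  rw [← hinv.inv_inv (e ≫ f), hinv.inv_eq_self_of_idem hxx, hxx]

lemma idem_comm (hinv : IsInverseOp inv) {A : C} {e f : A ⟶ A} (he : e ≫ e = e)
    (hf : f ≫ f = f) : e ≫ f = f ≫ e := by
  have hef := hinv.comp_idem he hf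
  have hfe := hinv.comp_idem hf he
  simp only [Category.assoc] at hef hfe
  have : f ≫ e = inv (e ≫ f) := by
    refine hinv.eq_inv ?_ ?_
    · simp only [Category.assoc]
      rw [reassoc_of% hf, reassoc_of% he, hef]
    · simp only [Category.assoc]
      rw [reassoc_of% he, reassoc_of% hf, hfe]
  rw [this, hinv.inv_eq_self_of_idem (hinv.comp_idem he hf)]

lemma inv_comp (hinv : IsInverseOp inv) {A B D : C} (f : A ⟶ B) (g : B ⟶ D) :
    inv (f ≫ g) = inv g ≫ inv f := by
  have hcomm : (inv f ≫ f) ≫ (g ≫ inv g) = (g ≫ inv g) ≫ (inv f ≫ f) :=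
    hinv.idem_comm (hinv.inv_comp_self_idem f) (hinv.comp_inv_self_idem g)
  simp only [Category.assoc] at hcomm
  refine (hinv.eq_inv ?_ ?_).symm
  · simp only [Category.assoc]
    rw [← reassoc_of% hcomm, reassoc_of% hinv.comp_inv_comp f, hinv.comp_inv_comp g]
  · simp only [Category.assoc]
    rw [reassoc_of% hcomm, reassoc_of% hinv.inv_comp_comp_inv g,
      hinv.inv_comp_comp_inv f]

lemma inv_zero [HasZeroMorphisms C] (hinv : IsInverseOp inv) {A B : C} :
    inv (0 : A ⟶ B) = 0 :=
  (hinv.eq_inv (by simp) (by simp)).symm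

lemma comp_inv_eq_id_of_mono (hinv : IsInverseOp inv) {A B : C} (u : A ⟶ B) [Mono u] :
    u ≫ inv u = 𝟙 A :=
  (cancel_mono u).1 (by rw [Category.assoc, hinv.comp_inv_comp, Category.id_comp])

lemma inv_comp_eq_id_of_epi (hinv : IsInverseOp inv) {A B : C} (q : A ⟶ B) [Epi q] :
    inv q ≫ q = 𝟙 B :=
  (cancel_epi q).1 (by rw [hinv.comp_inv_comp, Category.comp_id])

lemma mono_inv_of_epi (hinv : IsInverseOp inv) {A B : C} (q : A ⟶ B) [Epi q] :
    Mono (inv q) :=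
  mono_of_mono_fac (hinv.inv_comp_eq_id_of_epi q)

lemma isCokernelOf_inv [HasZeroMorphisms C] (hinv : IsInverseOp inv) {K A B : C}
    {u : K ⟶ A} {f : A ⟶ B} (hu : IsKernelOf u f) : IsCokernelOf (inv u) (inv f) := by
  have : Mono u := hu.mono
  have : Epi (inv u) := epi_of_epi_fac (hinv.comp_inv_eq_id_of_mono u)
  refine ⟨by rw [← hinv.inv_comp, hu.1, hinv.inv_zero], fun g hg => ?_⟩
  have hg' : inv g ≫ f = 0 := by
    rw [← hinv.inv_inv f, ← hinv.inv_comp, hg, hinv.inv_zero]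
  obtain ⟨h, hh, -⟩ := hu.2 (inv g) hg'
  have hgh : inv u ≫ inv h = g := by rw [← hinv.inv_comp, hh, hinv.inv_inv]
  exact ⟨inv h, hgh, fun y hy => (cancel_epi (inv u)).1 (hy.trans hgh.symm)⟩

lemma comp_eq_zero_iff_of_isKernelOf [HasZeroMorphisms C] (hinv : IsInverseOp inv)
    {K A B X : C} {u : K ⟶ A} {f : A ⟶ B} (hu : IsKernelOf u f) (g : X ⟶ A) :
    g ≫ f = 0 ↔ g ≫ inv u ≫ u = g := by
  refine ⟨fun hg => ?_, fun hg => ?_⟩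
  · obtain ⟨h, rfl, -⟩ := hu.2 g hg
    rw [Category.assoc, hinv.comp_inv_comp]
  · rw [← hg]
    simp only [Category.assoc, hu.1, comp_zero]

lemma exists_epi_mono_fac (hinv : IsInverseOp inv)
    (hfact : ∀ {A : C} (i : A ⟶ A), IsProjection inv i →
      ∃ (I : C) (q : A ⟶ I) (p : I ⟶ A), Epi q ∧ Mono p ∧ q ≫ p = i)
    {A B : C} (f : A ⟶ B) :
    ∃ (I : C) (q : A ⟶ I) (p : I ⟶ B), Epi q ∧ Mono p ∧ q ≫ p = f := by
  obtain ⟨I, q, p, hq, hp, hqp⟩ := hfact _ (hinv.isProjection_inv_comp_self f)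
  have hpq := comp_eq_id_of_fac_of_idem hqp (hinv.inv_comp_self_idem f)
  refine ⟨I, f ≫ q, p, epi_of_epi_fac (f := inv f) (h := q) ?_, hp, ?_⟩
  · rw [← Category.assoc, ← hqp, Category.assoc, hpq, Category.comp_id]
  · rw [Category.assoc, hqp, hinv.comp_inv_comp]

end IsInverseOp

namespace BaerStar

variable [HasZeroObject C] [HasZeroMorphisms C] {s : MorphismOp C}

lemma comp_eq_zero_iff (Bs : BaerStar C s) {A B X : C} (f : A ⟶ B) (g : X ⟶ A) :
    g ≫ f = 0 ↔ g ≫ Bs.prj f = g :=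
  (Bs.prj_spec f g).trans (exists_eq_comp_iff_comp_eq_self (Bs.prj_isProjection f).1 g)

lemma prj_comp (Bs : BaerStar C s) {A B : C} (f : A ⟶ B) : Bs.prj f ≫ f = 0 :=
  (Bs.comp_eq_zero_iff f _).2 (Bs.prj_isProjection f).1

lemma comp_prj_prj_of_isProjection (Bs : BaerStar C s) (hinv : IsInverseOp s) {A : C}
    {i : A ⟶ A} (hi : IsProjection s i) : i ≫ Bs.prj (Bs.prj i) = i := by
  refine (Bs.comp_eq_zero_iff _ _).1 ?_
  calc i ≫ Bs.prj i = s (Bs.prj i ≫ i) := by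
        rw [hinv.inv_comp, (Bs.prj_isProjection i).inv_eq, hi.inv_eq]
    _ = 0 := by rw [Bs.prj_comp, hinv.inv_zero]

lemma exists_isKernelOf (Bs : BaerStar C s)
    (hfact : ∀ {A : C} (i : A ⟶ A), IsProjection s i →
      ∃ (I : C) (q : A ⟶ I) (p : I ⟶ A), Epi q ∧ Mono p ∧ q ≫ p = i)
    {A B : C} (f : A ⟶ B) : ∃ (K : C) (u : K ⟶ A), IsKernelOf u f := by
  obtain ⟨I, q, p, hq, hp, hqp⟩ := hfact _ (Bs.prj_isProjection f)
  refine ⟨I, p, isKernelOf_of_fac (comp_eq_id_of_fac_of_idem hqp (Bs.prj_isProjection f).1)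
    fun g => ?_⟩
  rw [hqp]
  exact Bs.comp_eq_zero_iff f g

lemma exists_isKernelOf_of_mono (Bs : BaerStar C s) (hinv : IsInverseOp s)
    (hclosed : ∀ {A : C} (i : A ⟶ A), IsProjection s i → Bs.prj (Bs.prj i) = i)
    {K A : C} (u : K ⟶ A) [Mono u] : ∃ (B : C) (f : A ⟶ B), IsKernelOf u f := by
  refine ⟨A, Bs.prj (s u ≫ u),
    isKernelOf_of_fac (hinv.comp_inv_eq_id_of_mono u) fun g => ?_⟩
  rw [Bs.comp_eq_zero_iff, hclosed _ (hinv.isProjection_inv_comp_self u)]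

lemma isExactCategory (Bs : BaerStar C s) (hinv : IsInverseOp s)
    (hclosed : ∀ {A : C} (i : A ⟶ A), IsProjection s i → Bs.prj (Bs.prj i) = i)
    (hfact : ∀ {A : C} (i : A ⟶ A), IsProjection s i →
      ∃ (I : C) (q : A ⟶ I) (p : I ⟶ A), Epi q ∧ Mono p ∧ q ≫ p = i) :
    IsExactCategory C where
  hasKernels := Bs.exists_isKernelOf hfact
  hasCokernels f := by
    obtain ⟨K, u, hu⟩ := Bs.exists_isKernelOf hfact (s f)
    exact ⟨K, s u, by simpa only [hinv.inv_inv] using hinv.isCokernelOf_inv hu⟩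
  normal u _ := Bs.exists_isKernelOf_of_mono hinv hclosed u
  conormal v _ := by
    have := hinv.mono_inv_of_epi v
    obtain ⟨B, f, hf⟩ := Bs.exists_isKernelOf_of_mono hinv hclosed (s v)
    exact ⟨B, s f, by simpa only [hinv.inv_inv] using hinv.isCokernelOf_inv hf⟩
  monoEpiFact := hinv.exists_epi_mono_fac hfact

end BaerStar

namespace IsExactCategory

variable [HasZeroObject C] [HasZeroMorphisms C]

/-- Write `i = q ≫ p` with `p ≫ q = 𝟙` and `q` a cokernel of some `f₀`: then
`f₀ ≫ i = 0`, so `f₀` factors through `u` and is killed by `x`, whence `x` factors through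
`q`, which `i` fixes. -/
lemma idem_comp_eq_of_isKernelOf (hE : IsExactCategory C) {A K X : C} {i : A ⟶ A}
    (hi : i ≫ i = i) {u : K ⟶ A} (hu : IsKernelOf u i) {x : A ⟶ X} (hx : u ≫ x = 0) :
    i ≫ x = x := by
  obtain ⟨I, q, p, hq, hp, hqp⟩ := hE.monoEpiFact i
  have hpq := comp_eq_id_of_fac_of_idem hqp hi
  obtain ⟨Y, f₀, hf₀q, hq_univ⟩ := hE.conormal q hq
  obtain ⟨h, hh, -⟩ := hu.2 f₀ (by rw [← hqp, reassoc_of% hf₀q, zero_comp])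
  obtain ⟨t, rfl, -⟩ := hq_univ x (by rw [← hh, Category.assoc, hx, comp_zero])
  rw [← hqp, Category.assoc, reassoc_of% hpq]

noncomputable def kernelι (hE : IsExactCategory C) {A B : C} (f : A ⟶ B) :
    (hE.hasKernels f).choose ⟶ A :=
  (hE.hasKernels f).choose_spec.choose

lemma isKernelOf_kernelι (hE : IsExactCategory C) {A B : C} (f : A ⟶ B) :
    IsKernelOf (hE.kernelι f) f :=
  (hE.hasKernels f).choose_spec.choose_spec

noncomputable def baerStar (hE : IsExactCategory C) {inv : MorphismOp C}
    (hinv : IsInverseOp inv) : BaerStar C inv where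
  prj f := inv (hE.kernelι f) ≫ hE.kernelι f
  prj_isProjection f := hinv.isProjection_inv_comp_self _
  prj_spec f g := by
    rw [exists_eq_comp_iff_comp_eq_self (hinv.inv_comp_self_idem _),
      hinv.comp_eq_zero_iff_of_isKernelOf (hE.isKernelOf_kernelι f)]

lemma prj_prj_baerStar (hE : IsExactCategory C) {inv : MorphismOp C} (hinv : IsInverseOp inv)
    {A : C} {i : A ⟶ A} (hi : IsProjection inv i) :
    (hE.baerStar hinv).prj ((hE.baerStar hinv).prj i) = i := by
  set Bs := hE.baerStar hinv
  set P := Bs.prj (Bs.prj i)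
  have hu := hE.isKernelOf_kernelι i
  have := hu.mono
  have hPu : P ≫ inv (hE.kernelι i) = 0 :=
    (cancel_mono (hE.kernelι i)).1 (by rw [Category.assoc, zero_comp]; exact Bs.prj_comp _)
  have huP : hE.kernelι i ≫ P = 0 :=
    calc hE.kernelι i ≫ P = inv (P ≫ inv (hE.kernelι i)) := by
          rw [hinv.inv_comp, hinv.inv_inv, (Bs.prj_isProjection _).inv_eq]
      _ = 0 := by rw [hPu, hinv.inv_zero]
  calc P = i ≫ P := (hE.idem_comp_eq_of_isKernelOf hi.1 hu huP).symm
    _ = i := Bs.comp_prj_prj_of_isProjection hinv hi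

end IsExactCategory

/-- An inverse category is exact iff it is a Baer*-category with respect
to the canonical involution, every projection is closed, and every projection factors as a
monomorphism composed with an epimorphism. -/
theorem stmt5 [HasZeroObject C] [HasZeroMorphisms C] (inv : MorphismOp C)
    (hinv : IsInverseOp inv) :
    IsExactCategory C ↔
      ∃ Bs : BaerStar C inv,
        (∀ {A : C} (i : A ⟶ A), IsProjection inv i → Bs.prj (Bs.prj i) = i) ∧
        (∀ {A : C} (i : A ⟶ A), IsProjection inv i →
          ∃ (I : C) (q : A ⟶ I) (p : I ⟶ A), Epi q ∧ Mono p ∧ q ≫ p = i) :=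
  ⟨fun hE => ⟨hE.baerStar hinv, fun _ hi => hE.prj_prj_baerStar hinv hi,
      fun i _ => hE.monoEpiFact i⟩,
    fun ⟨Bs, hclosed, hfact⟩ => Bs.isExactCategory hinv hclosed hfact⟩
end
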